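/- arXiv:0706.0876 — 5 statements merged into one kernel-verified Lean document; each statement's English description precedes it below -/
import Mathlib

section
/- Let X be a reflexive Banach space and L an anti-selfdual Lagrangian on X × X*. Then for any (x,p) ∈ X × X*, L(x,p) + ⟨x,p⟩ = 0 if and only if (-p,-x) ∈ ∂L(x,p), where ∂L is the subdifferential of the convex function L on X × X*. -/
/-!
Anti-selfduality gives `L (x, p) = L* (-p, -x) ≥ -2⟨x, p⟩ - L (x, p)`, so `L (x, p) + ⟨x, p⟩ ≥ 0`
always. Rearranged, the subgradient inequality for `(-p, -x)` at `(x, p)` says that every term of the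
supremum defining `L* (-p, -x) = L (x, p)` is at most `-L (x, p) - 2⟨x, p⟩`, i.e. that
`L (x, p) + ⟨x, p⟩ ≤ 0`. Moreover `L` never takes the value `-∞`, which
would make `L* ≡ +∞`, and it is not identically `+∞`, which would make `L = L* ≡ -∞`.
-/

open NormedSpace

/-- Legendre transform in both variables. -/
noncomputable def legendre {X : Type*} [NormedAddCommGroup X] [NormedSpace ℝ X]
    (L : X × StrongDual ℝ X → EReal) : StrongDual ℝ X × X → EReal :=
  fun px => ⨆ y : X, ⨆ q : StrongDual ℝ X,
    (((px.1 y + q px.2 : ℝ) : EReal) - L (y, q))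

theorem EReal.coe_sub_le_coe_iff {u : EReal} {α β : ℝ} :
    (α : EReal) - u ≤ β ↔ ((α - β : ℝ) : EReal) ≤ u := by
  induction u with
  | bot => simpa using EReal.coe_ne_bot (α - β)
  | coe u => norm_cast; constructor <;> intro <;> linarith
  | top => simp

section

variable {X : Type*} [NormedAddCommGroup X] [NormedSpace ℝ X] {L : X × StrongDual ℝ X → EReal}

theorem legendre_le_iff {p : StrongDual ℝ X} {x : X} {c : EReal} :
    legendre L (p, x) ≤ c ↔ ∀ y q, ((p y + q x : ℝ) : EReal) - L (y, q) ≤ c := by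
  simp only [legendre, iSup_le_iff]

def IsAntiSelfdual (L : X × StrongDual ℝ X → EReal) : Prop :=
  ∀ x p, legendre L (p, x) = L (-x, -p)

namespace IsAntiSelfdual

theorem legendre_neg (hL : IsAntiSelfdual L) (x : X) (p : StrongDual ℝ X) :
    legendre L (-p, -x) = L (x, p) := by
  simpa using hL (-x) (-p)

theorem ne_bot (hL : IsAntiSelfdual L) (z : X × StrongDual ℝ X) : L z ≠ ⊥ := by
  intro hz
  have h_top : ∀ w, L w = ⊤ := fun w ↦ by
    rw [← hL.legendre_neg, eq_top_iff]
    exact (legendre_le_iff.1 le_rfl z.1 z.2).trans' (by simp [hz])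
  simp [h_top] at hz

theorem exists_ne_top (hL : IsAntiSelfdual L) : ∃ z, L z ≠ ⊤ := by
  by_contra! h_top
  have := hL.legendre_neg 0 0
  simp [legendre, h_top] at this

theorem neg_pairing_le (hL : IsAntiSelfdual L) (x : X) (p : StrongDual ℝ X) :
    ((-(p x) : ℝ) : EReal) ≤ L (x, p) := by
  have fenchel := legendre_le_iff.1 (hL.legendre_neg x p).le x p
  induction h : L (x, p) with
  | bot => exact absurd h (hL.ne_bot _)
  | top => exact le_top
  | coe a =>
    rw [h, EReal.coe_sub_le_coe_iff, EReal.coe_le_coe_iff] at fenchel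
    simp only [neg_apply, map_neg] at fenchel
    norm_cast
    linarith

theorem subgradient_iff_add_pairing_nonpos (hL : IsAntiSelfdual L) (x : X) (p : StrongDual ℝ X)
    {a : ℝ} (ha : L (x, p) = a) :
    (∀ z r, (a : EReal) + ((-(p (z - x)) - (r - p) x : ℝ) : EReal) ≤ L (z, r)) ↔
      a + p x ≤ 0 := by
  have h_shift : ∀ z r,
      a + (-(p (z - x)) - (r - p) x) = (-p) z + r (-x) - (-a - 2 * p x) := by
    intro z r
    simp only [map_sub, sub_apply, neg_apply, map_neg]
    ring
  simp_rw [← EReal.coe_add, h_shift, ← EReal.coe_sub_le_coe_iff]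
  rw [← legendre_le_iff, hL.legendre_neg, ha, EReal.coe_le_coe_iff]
  constructor <;> intro <;> linarith

end IsAntiSelfdual

end

theorem antiselfdual_eq_zero_iff_subdifferential_general {X : Type*}
    [NormedAddCommGroup X] [NormedSpace ℝ X]
    (L : X × StrongDual ℝ X → EReal)
    (hASD : ∀ (x : X) (p : StrongDual ℝ X), legendre L (p, x) = L (-x, -p)) :
    ∀ (x : X) (p : StrongDual ℝ X),
      L (x, p) + ((p x : ℝ) : EReal) = 0 ↔
      ∀ (z : X) (r : StrongDual ℝ X),
        L (x, p) + (((-(p (z - x)) - (r - p) x : ℝ)) : EReal) ≤ L (z, r) := by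
  have hL : IsAntiSelfdual L := hASD
  intro x p
  induction h : L (x, p) with
  | bot => exact absurd h (hL.ne_bot _)
  | top =>
    refine iff_of_false (by simp) fun H ↦ ?_
    obtain ⟨z, hz⟩ := hL.exists_ne_top
    exact hz (top_le_iff.1 <| by simpa only [EReal.top_add_coe] using H z.1 z.2)
  | coe a =>
    have h_lower := hL.neg_pairing_le x p
    rw [h, EReal.coe_le_coe_iff] at h_lower
    rw [hL.subgradient_iff_add_pairing_nonpos x p h, ← EReal.coe_add, EReal.coe_eq_zero]
    constructor <;> intro <;> linarith

/-- For an anti-selfdual (convex, lsc) Lagrangian `L` on `X × X*`,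
`L(x,p) + ⟨x,p⟩ = 0` iff `(-p,-x) ∈ ∂L(x,p)`, i.e. iff
`L(z,r) ≥ L(x,p) + ⟨z-x, -p⟩ + ⟨r-p, -x⟩` for all `(z,r)`. -/
theorem antiselfdual_eq_zero_iff_subdifferential {X : Type*}
    [NormedAddCommGroup X] [NormedSpace ℝ X]
    (L : X × StrongDual ℝ X → EReal)
    (hbot : ∀ z, L z ≠ ⊥)
    (hconv : ∀ (z w : X × StrongDual ℝ X) (a b : ℝ), 0 ≤ a → 0 ≤ b → a + b = 1 →
      L (a • z + b • w) ≤ (a : EReal) * L z + (b : EReal) * L w)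
    (hlsc : LowerSemicontinuous L)
    (hASD : ∀ (x : X) (p : StrongDual ℝ X), legendre L (p, x) = L (-x, -p)) :
    ∀ (x : X) (p : StrongDual ℝ X),
      L (x, p) + ((p x : ℝ) : EReal) = 0 ↔
      ∀ (z : X) (r : StrongDual ℝ X),
        L (x, p) + (((-(p (z - x)) - (r - p) x : ℝ)) : EReal) ≤ L (z, r) :=
  antiselfdual_eq_zero_iff_subdifferential_general L hASD
end

section
/- Let X be a reflexive Banach space, L an anti-selfdual Lagrangian on X × X*, and A : X → X* a bounded skew-adjoint operator (i.e. ⟨Ax,y⟩ = -⟨Ay,x⟩ for all x,y ∈ X). Then the Lagrangian M(u,p) := L(u, Au + p) is also anti-selfdual. -/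
open NormedSpace

/-- A Lagrangian is anti-selfdual if `L*(p,x) = L(-x,-p)` for all `(x,p)`. -/
def IsAntiSelfDual {X : Type*} [NormedAddCommGroup X] [NormedSpace ℝ X]
    (L : X × StrongDual ℝ X → EReal) : Prop :=
  ∀ (x : X) (p : StrongDual ℝ X), legendre L (p, x) = L (-x, -p)

/-- Substituting `r = A y + q` in the supremum, skewness turns the term `-⟨A y, x⟩` into
`⟨A x, y⟩`, which is absorbed into the first dual variable. -/
theorem legendre_skew_shift {X : Type*} [NormedAddCommGroup X] [NormedSpace ℝ X]
    (L : X × StrongDual ℝ X → EReal) (A : X →L[ℝ] StrongDual ℝ X)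
    (hskew : ∀ x y : X, A x y = -(A y x)) (p : StrongDual ℝ X) (x : X) :
    legendre (fun up => L (up.1, A up.1 + up.2)) (p, x) = legendre L (p + A x, x) := by
  refine iSup_congr fun y => ?_
  refine Eq.trans ?_ (Equiv.addLeft (A y)).iSup_comp
  refine iSup_congr fun q => ?_
  simp only [Equiv.coe_addLeft, add_apply, hskew x y]
  congr 2
  ring

/-- If `L` is anti-selfdual and `A : X → X*` is a bounded skew-adjoint operator
(`⟨Ax, y⟩ = -⟨Ay, x⟩`), then `M(u,p) := L(u, Au + p)` is also anti-selfdual. -/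
theorem antiselfdual_skew_shift {X : Type*} [NormedAddCommGroup X] [NormedSpace ℝ X]
    (L : X × StrongDual ℝ X → EReal) (hASD : IsAntiSelfDual L)
    (A : X →L[ℝ] StrongDual ℝ X) (hskew : ∀ x y : X, A x y = -(A y x)) :
    IsAntiSelfDual (fun up => L (up.1, A up.1 + up.2)) := by
  intro x p
  rw [legendre_skew_shift L A hskew, hASD]
  dsimp only
  rw [map_neg, neg_add_rev]
end

section
/- Let X ⊆ H ⊆ X* be an evolution triple with linear symmetric duality map D, let S̄ be a unitary operator on X* and S = D⁻¹S̄D the induced unitary on X. If L is an anti-selfdual Lagrangian on X × X*, then L_S(u,p) := L(Su, S̄p) is also an anti-selfdual Lagrangian on X × X*. -/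
open NormedSpace

section

variable {X : Type*} [NormedAddCommGroup X] [NormedSpace ℝ X]

/-- Substitute `y ↦ e y`, `q ↦ f q` in both suprema; the pairing condition turns
`p y + q x` into `f p (e y) + f q (e x)`. -/
theorem legendre_comp_prodMap (e : X ≃ X) (f : StrongDual ℝ X ≃ StrongDual ℝ X)
    (hpair : ∀ (u : X) (q : StrongDual ℝ X), f q (e u) = q u)
    (L : X × StrongDual ℝ X → EReal) (p : StrongDual ℝ X) (x : X) :
    legendre (fun yq => L (e yq.1, f yq.2)) (p, x) = legendre L (f p, e x) := by
  simp only [legendre, ← hpair _ p, ← hpair x]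
  rw [← e.iSup_comp (g := fun y => ⨆ q, ((f p y + q (e x) : ℝ) : EReal) - L (y, q))]
  exact iSup_congr fun y =>
    f.iSup_comp (g := fun q => ((f p (e y) + q (e x) : ℝ) : EReal) - L (e y, q))

theorem IsAntiSelfDual.comp_prodMap {L : X × StrongDual ℝ X → EReal} (hL : IsAntiSelfDual L)
    (e : X ≃+ X) (f : StrongDual ℝ X ≃+ StrongDual ℝ X)
    (hpair : ∀ (u : X) (q : StrongDual ℝ X), f q (e u) = q u) :
    IsAntiSelfDual (fun yq => L (e yq.1, f yq.2)) := by
  intro x p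
  refine (legendre_comp_prodMap e.toEquiv f.toEquiv hpair L p x).trans ?_
  simp only [map_neg]
  exact hL (e x) (f p)

end

theorem antiselfdual_conjugated_unitary_general {X : Type*}
    [NormedAddCommGroup X] [NormedSpace ℝ X]
    (D : X ≃L[ℝ] StrongDual ℝ X)
    (Sb : StrongDual ℝ X ≃L[ℝ] StrongDual ℝ X)
    (hiso : ∀ p q : StrongDual ℝ X, (Sb q) (D.symm (Sb p)) = q (D.symm p))
    (L : X × StrongDual ℝ X → EReal) (hASD : IsAntiSelfDual L) :
    IsAntiSelfDual (fun up => L (D.symm (Sb (D up.1)), Sb up.2)) :=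
  hASD.comp_prodMap ((D.trans Sb).trans D.symm).toLinearEquiv.toAddEquiv
    Sb.toLinearEquiv.toAddEquiv fun u q => by simpa using hiso (D u) q

/-- With `D : X → X*` a linear symmetric duality map (`‖x‖² = ⟨x,Dx⟩`),
`S̄` a unitary operator on `X*` (for the inner product `⟨p,q⟩_{X*} = ⟨D⁻¹p,q⟩`)
and `S := D⁻¹ S̄ D` the induced unitary on `X`: if `L` is anti-selfdual on
`X × X*` then so is `L_S(u,p) := L(Su, S̄p)`. -/
theorem antiselfdual_conjugated_unitary {X : Type*}
    [NormedAddCommGroup X] [NormedSpace ℝ X]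
    (D : X ≃L[ℝ] StrongDual ℝ X)
    (hsym : ∀ u v : X, D u v = D v u)
    (hnorm : ∀ x : X, ‖x‖ ^ 2 = D x x)
    (Sb : StrongDual ℝ X ≃L[ℝ] StrongDual ℝ X)
    (hiso : ∀ p q : StrongDual ℝ X, (Sb q) (D.symm (Sb p)) = q (D.symm p))
    (L : X × StrongDual ℝ X → EReal) (hASD : IsAntiSelfDual L) :
    IsAntiSelfDual (fun up => L (D.symm (Sb (D up.1)), Sb up.2)) :=
  antiselfdual_conjugated_unitary_general D Sb hiso L hASD
end

section
/- Let X be a reflexive Banach space, L an anti-selfdual Lagrangian on X × X*, and suppose there exist C > 0 and r > 1 such that -C ≤ L(x,0) ≤ C(1 + ‖x‖_X^r) for all x ∈ X. Then there exist constants C₁ > 0 and C₂ > 0 such that L(x,q) ≥ C₁‖q‖_{X*}^s - C₂ for every (x,q) ∈ X × X*, where 1/r + 1/s = 1. -/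
open NormedSpace

/-!
Anti-selfduality gives `L(x, q) = L*(-q, -x) ≥ ⟨y, -q⟩ - L(y, 0)` for every `y`, so `L(·, q)` is
bounded below by the conjugate of the upper bound `C(1 + ‖y‖^r)` evaluated at `-q`. Testing
with `y = t u`, where `‖u‖ ≤ 1` and `-q` takes at least half its norm at `u`, and with
`t = a‖q‖^(s-1)`, turns `t‖q‖/2 - C t^r` into a positive multiple of `‖q‖^s`, because
`(s - 1) r = s`.
-/

lemma StrongDual.exists_norm_le_one_half_norm_le_apply {E : Type*} [NormedAddCommGroup E]
    [NormedSpace ℝ E] (f : StrongDual ℝ E) : ∃ u : E, ‖u‖ ≤ 1 ∧ ‖f‖ / 2 ≤ f u := by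
  rcases (norm_nonneg f).eq_or_lt with hf_zero | hf_pos
  · exact ⟨0, by simp, by simp [← hf_zero]⟩
  obtain ⟨u, hu, hfu⟩ := f.exists_lt_apply_of_lt_opNorm (half_lt_self hf_pos)
  rcases le_or_gt 0 (f u) with hpos | hneg
  · exact ⟨u, hu.le, by rw [Real.norm_of_nonneg hpos] at hfu; exact hfu.le⟩
  · refine ⟨-u, by rw [norm_neg]; exact hu.le, ?_⟩
    rw [Real.norm_of_nonpos hneg.le] at hfu
    rw [map_neg]
    exact hfu.le

lemma Real.HolderConjugate.exists_pos_le_mul_sub_rpow {r s C : ℝ} (hrs : r.HolderConjugate s)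
    (hC : 0 < C) : ∃ c > 0, ∀ N ≥ 0, ∃ t ≥ 0, c * N ^ s ≤ t * N - C * t ^ r := by
  set a : ℝ := (2 * C)⁻¹ ^ (r - 1)⁻¹
  have ha : 0 < a := by positivity
  have hCa : C * a ^ r = a / 2 := by
    have : a ^ (r - 1) = (2 * C)⁻¹ := Real.rpow_inv_rpow (by positivity) hrs.sub_one_ne_zero
    rw [← sub_add_cancel r 1, Real.rpow_add_one ha.ne', this]
    field_simp
  refine ⟨a / 2, by positivity, fun N hN => ⟨a * N ^ (s - 1), by positivity, ?_⟩⟩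
  have hlin : a * N ^ (s - 1) * N = a * N ^ s := by
    rw [mul_assoc, ← Real.rpow_add_one' hN (by rw [sub_add_cancel]; exact hrs.symm.ne_zero),
      sub_add_cancel]
  have hpow : (a * N ^ (s - 1)) ^ r = a ^ r * N ^ s := by
    rw [Real.mul_rpow ha.le (by positivity), ← Real.rpow_mul hN, hrs.symm.sub_one_mul_conj]
  rw [hlin, hpow, ← mul_assoc, hCa]
  linarith

section Legendre

variable {X : Type*} [NormedAddCommGroup X] [NormedSpace ℝ X] (L : X × StrongDual ℝ X → EReal)

lemma le_legendre (p : StrongDual ℝ X) (x y : X) (q : StrongDual ℝ X) :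
    ((p y + q x : ℝ) : EReal) - L (y, q) ≤ legendre L (p, x) :=
  le_iSup₂_of_le (f := fun y q => ((p y + q x : ℝ) : EReal) - L (y, q)) y q le_rfl

lemma apply_neg_sub_le_of_antiselfdual
    (hASD : ∀ (x : X) (p : StrongDual ℝ X), legendre L (p, x) = L (-x, -p))
    (x : X) (q : StrongDual ℝ X) (y : X) : (((-q) y : ℝ) : EReal) - L (y, 0) ≤ L (x, q) := by
  simpa only [hASD, neg_neg, zero_apply, add_zero] using
    le_legendre L (-q) (-x) y 0

end Legendre

theorem antiselfdual_dual_coercive_general {X : Type*} [NormedAddCommGroup X] [NormedSpace ℝ X]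
    (L : X × StrongDual ℝ X → EReal)
    (hASD : ∀ (x : X) (p : StrongDual ℝ X), legendre L (p, x) = L (-x, -p))
    (C r s : ℝ) (hC : 0 < C) (hr : 1 < r) (hrs : 1 / r + 1 / s = 1)
    (hup : ∀ x : X, L (x, 0) ≤ ((C * (1 + ‖x‖ ^ r) : ℝ) : EReal)) :
    ∃ C₁ C₂ : ℝ, 0 < C₁ ∧ 0 < C₂ ∧
      ∀ (x : X) (q : StrongDual ℝ X), ((C₁ * ‖q‖ ^ s - C₂ : ℝ) : EReal) ≤ L (x, q) := by
  have hconj : r.HolderConjugate s :=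
    Real.holderConjugate_iff.2 ⟨hr, by simpa only [one_div] using hrs⟩
  obtain ⟨c, hc, hconjugate⟩ := hconj.exists_pos_le_mul_sub_rpow (C := 2 * C) (by positivity)
  refine ⟨c / 2, C, by positivity, hC, fun x q => ?_⟩
  obtain ⟨t, ht, hct⟩ := hconjugate ‖q‖ (norm_nonneg q)
  obtain ⟨u, hu, hqu⟩ := (-q).exists_norm_le_one_half_norm_le_apply
  have hnorm : C * ‖t • u‖ ^ r ≤ C * t ^ r := by
    gcongr
    rw [norm_smul, Real.norm_of_nonneg ht]
    exact mul_le_of_le_one_right ht hu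
  have happly : t * (‖q‖ / 2) ≤ (-q) (t • u) := by
    rw [map_smul, smul_eq_mul, ← norm_neg q]
    exact mul_le_mul_of_nonneg_left hqu ht
  calc ((c / 2 * ‖q‖ ^ s - C : ℝ) : EReal)
      ≤ (((-q) (t • u) - C * (1 + ‖t • u‖ ^ r) : ℝ) : EReal) := by
        rw [EReal.coe_le_coe_iff]
        linarith
    _ ≤ (((-q) (t • u) : ℝ) : EReal) - L (t • u, 0) := by
        rw [EReal.coe_sub]
        exact EReal.sub_le_sub le_rfl (hup _)
    _ ≤ L (x, q) := apply_neg_sub_le_of_antiselfdual L hASD x q (t • u)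

/-- If `L` is an anti-selfdual Lagrangian on `X × X*` with
`-C ≤ L(x,0) ≤ C(1 + ‖x‖^r)` for some `C > 0`, `r > 1`, then there are `C₁, C₂ > 0`
with `L(x,q) ≥ C₁‖q‖^s - C₂` for all `(x,q)`, where `1/r + 1/s = 1`. -/
theorem antiselfdual_dual_coercive {X : Type*} [NormedAddCommGroup X] [NormedSpace ℝ X]
    (L : X × StrongDual ℝ X → EReal)
    (hASD : ∀ (x : X) (p : StrongDual ℝ X), legendre L (p, x) = L (-x, -p))
    (C r s : ℝ) (hC : 0 < C) (hr : 1 < r) (hrs : 1 / r + 1 / s = 1)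
    (hlow : ∀ x : X, ((-C : ℝ) : EReal) ≤ L (x, 0))
    (hup : ∀ x : X, L (x, 0) ≤ ((C * (1 + ‖x‖ ^ r) : ℝ) : EReal)) :
    ∃ C₁ C₂ : ℝ, 0 < C₁ ∧ 0 < C₂ ∧
      ∀ (x : X) (q : StrongDual ℝ X), ((C₁ * ‖q‖ ^ s - C₂ : ℝ) : EReal) ≤ L (x, q) :=
  antiselfdual_dual_coercive_general L hASD C r s hC hr hrs hup
end

section
/- With the notation above, assume the boundary Lagrangian ℓ : X × X → ℝ ∪ {+∞} satisfies ℓ(x,p) ≥ -⟨x, Ãp⟩ for all x ∈ X and p ∈ Y (Y the completion of D(Ã) under ⟨u, Ãu⟩). Then for every u ∈ W, ℓ(u(T) - u(0), R(u(T)+u(0))/2) + ∫₀ᵀ ⟨Ju̇(t), J𝒜u(t)⟩ dt ≥ 0. -/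
open MeasureTheory
open scoped RealInnerProductSpace

variable {H : Type*} [NormedAddCommGroup H] [InnerProductSpace ℝ H]

/-- The Hilbertian inner product of `X = H × H`. -/
noncomputable def innerX (a b : H × H) : ℝ := ⟪a.1, b.1⟫ + ⟪a.2, b.2⟫

/-- The symplectic operator `J(p,q) = (-q,p)`. -/
def Jmap (z : H × H) : H × H := (-z.2, z.1)

/-- The operator `𝒜(p,q) = (Ap, -Aq)`. -/
def Amap (A : H →ₗ[ℝ] H) (z : H × H) : H × H := (A z.1, -A z.2)

/-- The operator `Ã(p,q) = (Ap, Aq)`. -/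
def Atil (A : H →ₗ[ℝ] H) (z : H × H) : H × H := (A z.1, A z.2)

/-- The automorphism `R(p,q) = (p,-q)`. -/
def Rmap (z : H × H) : H × H := (z.1, -z.2)

/-! Since `J` is an isometry of `X` and `𝒜` is symmetric, `⟨Ju̇, J𝒜u⟩` is the derivative of
`½⟨u, 𝒜u⟩`; the integral is therefore `½⟨u(T), 𝒜u(T)⟩ - ½⟨u(0), 𝒜u(0)⟩
= ⟨u(T) - u(0), ÃR(u(T) + u(0))/2⟩`, which is exactly what the bound on `ℓ` compensates. -/

section Algebra

variable {A : H →ₗ[ℝ] H}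

theorem innerX_Jmap_Jmap (a b : H × H) : innerX (Jmap a) (Jmap b) = innerX a b := by
  simp only [innerX, Jmap, inner_neg_neg]
  ring

theorem Atil_Rmap (z : H × H) : Atil A (Rmap z) = Amap A z := by
  simp only [Atil, Rmap, Amap, map_neg]

theorem innerX_Amap_comm (hsym : ∀ x y : H, ⟪A x, y⟫ = ⟪x, A y⟫) (a b : H × H) :
    innerX a (Amap A b) = innerX b (Amap A a) := by
  simp only [innerX, Amap, inner_neg_right]
  rw [← real_inner_comm a.1, hsym, ← real_inner_comm a.2, hsym]

theorem innerX_sub_Amap_midpoint (hsym : ∀ x y : H, ⟪A x, y⟫ = ⟪x, A y⟫) (a b : H × H) :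
    innerX (b - a) (Amap A ((2⁻¹ : ℝ) • (b + a))) =
      2⁻¹ * innerX b (Amap A b) - 2⁻¹ * innerX a (Amap A a) := by
  have hab := innerX_Amap_comm hsym a b
  simp only [innerX, Amap, Prod.smul_fst, Prod.smul_snd, Prod.fst_add, Prod.snd_add,
    Prod.fst_sub, Prod.snd_sub, map_smul, map_add, inner_sub_left, inner_add_right,
    inner_smul_right, inner_neg_right] at hab ⊢
  linarith

end Algebra

section Calculus

variable {u : ℝ → H × H} {u' : H × H} {t : ℝ}

theorem HasDerivAt.innerX {v : ℝ → H × H} {v' : H × H} (hu : HasDerivAt u u' t)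
    (hv : HasDerivAt v v' t) :
    HasDerivAt (fun s => innerX (u s) (v s)) (innerX u' (v t) + innerX (u t) v') t := by
  have hu₁ : HasDerivAt (fun s => (u s).1) u'.1 t := hu.fst
  have hu₂ : HasDerivAt (fun s => (u s).2) u'.2 t := hu.snd
  have hv₁ : HasDerivAt (fun s => (v s).1) v'.1 t := hv.fst
  have hv₂ : HasDerivAt (fun s => (v s).2) v'.2 t := hv.snd
  refine ((hu₁.inner ℝ hv₁).add (hu₂.inner ℝ hv₂)).congr_deriv ?_
  simp only [_root_.innerX]
  ring

theorem hasDerivAt_half_innerX_Amap {A : H →ₗ[ℝ] H} (hsym : ∀ x y : H, ⟪A x, y⟫ = ⟪x, A y⟫)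
    (hu : HasDerivAt u u' t) (hAu : HasDerivAt (fun s => Atil A (u s)) (Atil A u') t) :
    HasDerivAt (fun s => 2⁻¹ * innerX (u s) (Amap A (u s))) (innerX u' (Amap A (u t))) t := by
  have hAu₁ : HasDerivAt (fun s => A (u s).1) (A u'.1) t := hAu.fst
  have hAu₂ : HasDerivAt (fun s => A (u s).2) (A u'.2) t := hAu.snd
  have hAmap : HasDerivAt (fun s => Amap A (u s)) (Amap A u') t := hAu₁.prodMk hAu₂.neg
  refine ((hu.innerX hAmap).const_mul (2⁻¹ : ℝ)).congr_deriv ?_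
  rw [innerX_Amap_comm hsym (u t) u']
  ring

end Calculus

theorem boundary_lagrangian_nonneg_general
    (A : H →ₗ[ℝ] H)
    (hsym : ∀ x y : H, ⟪A x, y⟫ = ⟪x, A y⟫)
    (ℓ : (H × H) × (H × H) → EReal)
    (hℓ : ∀ x p : H × H, ((-innerX x (Atil A p) : ℝ) : EReal) ≤ ℓ (x, p))
    (T : ℝ) (u u' : ℝ → H × H)
    (hder : ∀ t ∈ Set.uIcc (0 : ℝ) T, HasDerivAt u (u' t) t)
    (hAder : ∀ t ∈ Set.uIcc (0 : ℝ) T,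
      HasDerivAt (fun s => Atil A (u s)) (Atil A (u' t)) t)
    (hint : IntervalIntegrable
      (fun t => innerX (Jmap (u' t)) (Jmap (Amap A (u t)))) volume 0 T) :
    0 ≤ ℓ (u T - u 0, Rmap ((2⁻¹ : ℝ) • (u T + u 0)))
        + (((∫ t in (0 : ℝ)..T, innerX (Jmap (u' t)) (Jmap (Amap A (u t)))) : ℝ) : EReal) := by
  simp only [innerX_Jmap_Jmap] at hint ⊢
  have hFTC : ∫ t in (0 : ℝ)..T, innerX (u' t) (Amap A (u t)) =
      innerX (u T - u 0) (Atil A (Rmap ((2⁻¹ : ℝ) • (u T + u 0)))) := by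
    rw [Atil_Rmap, innerX_sub_Amap_midpoint hsym]
    exact intervalIntegral.integral_eq_sub_of_hasDerivAt
      (fun t ht => hasDerivAt_half_innerX_Amap hsym (hder t ht) (hAder t ht)) hint
  rw [hFTC]
  set boundary := innerX (u T - u 0) (Atil A (Rmap ((2⁻¹ : ℝ) • (u T + u 0))))
  calc (0 : EReal) = ((-boundary : ℝ) : EReal) + (boundary : ℝ) := by norm_cast; ring
    _ ≤ _ := add_le_add_left (hℓ _ _) _

/-- If the boundary Lagrangian `ℓ` satisfies `ℓ(x,p) ≥ -⟨x, Ãp⟩`, then for every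
path `u ∈ W`, `ℓ(u(T)-u(0), R(u(T)+u(0))/2) + ∫₀ᵀ ⟨Ju̇, J𝒜u⟩ dt ≥ 0`. -/
theorem boundary_lagrangian_nonneg [CompleteSpace H]
    (A : H →ₗ[ℝ] H)
    (hsym : ∀ x y : H, ⟪A x, y⟫ = ⟪x, A y⟫)
    (c₀ : ℝ) (hc₀ : 0 < c₀) (hcoer : ∀ x : H, c₀ * ‖x‖ ^ 2 ≤ ⟪A x, x⟫)
    (ℓ : (H × H) × (H × H) → EReal)
    (hℓ : ∀ x p : H × H, ((-innerX x (Atil A p) : ℝ) : EReal) ≤ ℓ (x, p))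
    (T : ℝ) (hT : 0 ≤ T) (u u' : ℝ → H × H)
    (hder : ∀ t ∈ Set.uIcc (0 : ℝ) T, HasDerivAt u (u' t) t)
    (hAder : ∀ t ∈ Set.uIcc (0 : ℝ) T,
      HasDerivAt (fun s => Atil A (u s)) (Atil A (u' t)) t)
    (hint : IntervalIntegrable
      (fun t => innerX (Jmap (u' t)) (Jmap (Amap A (u t)))) volume 0 T) :
    0 ≤ ℓ (u T - u 0, Rmap ((2⁻¹ : ℝ) • (u T + u 0)))
        + (((∫ t in (0 : ℝ)..T, innerX (Jmap (u' t)) (Jmap (Amap A (u t)))) : ℝ) : EReal) :=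
  boundary_lagrangian_nonneg_general A hsym ℓ hℓ T u u' hder hAder hint
end
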